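/- Let U, Ũ ⊆ ℝⁿ be open sets with the closure of U compact and contained in Ũ, let Ǧ : Ũ × ℝⁿ → ℝ be a smooth family of asymmetric norms, and let F : Ũ × ℝⁿ → ℝ be a horizontally C² family of asymmetric norms which is strongly convex with respect to Ǧ and such that the horizontal gradient d_hF² of (x,y) ↦ F(x,y)² is locally Lipschitz on Ũ × ℝⁿ; suppose that for each x ∈ Ũ the function α ↦ F_*(x, α)² is differentiable with gradient d_vF_*²(x, α). Then for every (x, β) ∈ U × ℝⁿ there exist open neighborhoods U'' ⊆ U of x and V'' ⊆ ℝⁿ of β and a constant C₅ > 0 such that ‖d_vF_*²(x₁, α) − d_vF_*²(x₂, α)‖ ≤ C₅‖x₁ − x₂‖ for all x₁, x₂ ∈ U'' and all α ∈ V'', where ‖·‖ is the Euclidean norm. -/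

import Mathlib

open scoped RealInnerProductSpace

/-- `ℝⁿ` with the Euclidean inner product. -/
abbrev En (n : ℕ) := EuclideanSpace ℝ (Fin n)

/-- An asymmetric norm on `ℝⁿ`. -/
def IsAsymNorm {n : ℕ} (F : En n → ℝ) : Prop :=
  (∀ y, 0 ≤ F y) ∧ (∀ y, F y = 0 ↔ y = 0) ∧
  (∀ l : ℝ, 0 < l → ∀ y, F (l • y) = l * F y) ∧
  (∀ y₁ y₂, F (y₁ + y₂) ≤ F y₁ + F y₂)

/-- A horizontally `C¹` family of asymmetric norms on `Ut × ℝⁿ`: `F` is continuous,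
each `F x` is an asymmetric norm, and the partial derivative of `F` with respect to
the (horizontal) variable `x` exists everywhere and is continuous. -/
def HorizC1Family {n : ℕ} (Ut : Set (En n)) (F : En n → En n → ℝ) : Prop :=
  ContinuousOn (fun p : En n × En n => F p.1 p.2) (Ut ×ˢ Set.univ) ∧
  (∀ x ∈ Ut, IsAsymNorm (F x)) ∧
  ∃ DF : En n × En n → (En n →L[ℝ] ℝ),
    (∀ x ∈ Ut, ∀ y, HasFDerivAt (fun x' => F x' y) (DF (x, y)) x) ∧
    ContinuousOn DF (Ut ×ˢ Set.univ)

/-- The family of dual asymmetric norms `F_*(x, α) = sup {⟨α, y⟩ : F x y ≤ 1}`. -/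
noncomputable def dualNormF {n : ℕ} (F : En n → En n → ℝ) (x α : En n) : ℝ :=
  sSup ((fun y => ⟪α, y⟫) '' {y | F x y ≤ 1})

/-- A smooth family of asymmetric norms: each `G x` is an asymmetric norm and
`G` is `C^∞` on `Ut × (ℝⁿ \ {0})`. -/
def SmoothFamily {n : ℕ} (Ut : Set (En n)) (G : En n → En n → ℝ) : Prop :=
  (∀ x ∈ Ut, IsAsymNorm (G x)) ∧
  ContDiffOn ℝ (⊤ : ℕ∞) (fun p : En n × En n => G p.1 p.2) (Ut ×ˢ {y : En n | y ≠ 0})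

/-- The subdifferential of `F(x,·)²` at `y`. -/
def subdiffSqF {n : ℕ} (F : En n → En n → ℝ) (x y : En n) : Set (En n) :=
  {α | ∀ z, (F x y) ^ 2 + ⟪α, z - y⟫ ≤ (F x z) ^ 2}

/-- The family `F` is strongly convex with respect to the family `G` on `Ut`. -/
def StronglyConvexFamilyWrt {n : ℕ} (Ut : Set (En n)) (F G : En n → En n → ℝ) : Prop :=
  ∀ x ∈ Ut, ∀ y z α, α ∈ subdiffSqF F x y →
    (F x y) ^ 2 + ⟪α, z - y⟫ + (G x (z - y)) ^ 2 ≤ (F x z) ^ 2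

/-- A horizontally `C²` family of asymmetric norms: a horizontally `C¹` family whose
horizontal derivative is itself horizontally differentiable, with second horizontal
derivative continuous on `Ut × (ℝⁿ \ {0})`. -/
def HorizC2Family {n : ℕ} (Ut : Set (En n)) (F : En n → En n → ℝ) : Prop :=
  HorizC1Family Ut F ∧
  ∃ DF : En n × En n → (En n →L[ℝ] ℝ),
    (∀ x ∈ Ut, ∀ y, HasFDerivAt (fun x' => F x' y) (DF (x, y)) x) ∧
    ContinuousOn DF (Ut ×ˢ Set.univ) ∧
    ∃ D2F : En n × En n → (En n →L[ℝ] En n →L[ℝ] ℝ),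
      (∀ x ∈ Ut, ∀ y : En n, y ≠ 0 → HasFDerivAt (fun x' => DF (x', y)) (D2F (x, y)) x) ∧
      ContinuousOn D2F (Ut ×ˢ {y : En n | y ≠ 0})


open Metric Set
open scoped NNReal


lemma lipschitzOn_of_locallyLipschitzOn_compact {X Y : Type*} [MetricSpace X] [MetricSpace Y]
    {f : X → Y} {s k : Set X} (hso : IsOpen s) (hf : LocallyLipschitzOn s f)
    (hk : IsCompact k) (hks : k ⊆ s) :
    ∃ L : ℝ, 0 ≤ L ∧ ∀ p ∈ k, ∀ q ∈ k, dist (f p) (f q) ≤ L * dist p q := by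
  rcases k.eq_empty_or_nonempty with rfl | hne
  · exact ⟨0, le_refl _, by simp⟩
  have hchoice : ∀ x : X, x ∈ k → ∃ (K : ℝ≥0) (ε : ℝ), 0 < ε ∧ LipschitzOnWith K f (ball x ε) := by
    intro x hx
    obtain ⟨K, t, ht, hlip⟩ := hf (hks hx)
    rw [nhdsWithin_eq_nhds.2 (hso.mem_nhds (hks hx))] at ht
    obtain ⟨ε, hε, hball⟩ := Metric.mem_nhds_iff.1 ht
    exact ⟨K, ε, hε, hlip.mono hball⟩
  choose! K ε hε hlip using hchoice
  obtain ⟨I, hI⟩ := hk.elim_nhds_subcover' (fun x hx => ball x (ε x / 2)) (fun x hx =>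
    ball_mem_nhds x (half_pos (hε x hx)))
  have hIne : I.Nonempty := by
    rcases hne with ⟨x, hx⟩
    by_contra h
    rw [Finset.not_nonempty_iff_eq_empty] at h
    have := hI hx
    simp [h] at this
  -- δ : minimal half-radius
  set δ : ℝ := I.inf' hIne (fun x => ε x / 2) with hδdef
  have hδpos : 0 < δ := by
    rw [hδdef, Finset.lt_inf'_iff]
    exact fun x _ => half_pos (hε x x.2)
  -- M : max Lipschitz constant
  set M : ℝ := I.sup' hIne (fun x => (K x : ℝ)) with hMdef
  -- D : bound on distances of images
  have hfc : ContinuousOn f k := (hf.continuousOn).mono hks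
  have himg : IsCompact (f '' k) := hk.image_of_continuousOn hfc
  obtain ⟨D, hD⟩ := himg.isBounded.subset_closedBall (f hne.choose)
  have hM0 : 0 ≤ M := by
    rw [hMdef]
    exact le_trans (K (hIne.choose : X)).coe_nonneg
      (Finset.le_sup' (fun (x : ↥k) => (K (x:X) : ℝ)) hIne.choose_spec)
  refine ⟨max M (2 * D / δ), le_trans hM0 (le_max_left _ _), fun p hp q hq => ?_⟩
  rcases lt_or_ge (dist p q) δ with hlt | hge
  · -- p, q in a common ball
    have hpI := hI hp
    simp only [mem_iUnion] at hpI
    obtain ⟨x, hxI, hpx⟩ := hpI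
    have hqx : q ∈ ball (x : X) (ε x) := by
      rw [mem_ball] at hpx ⊢
      have : δ ≤ ε x / 2 := Finset.inf'_le _ hxI
      calc dist q (x:X) ≤ dist q p + dist p (x:X) := dist_triangle _ _ _
        _ < δ + ε x / 2 := by rw [dist_comm q p]; exact add_lt_add hlt hpx
        _ ≤ ε x / 2 + ε x / 2 := by linarith
        _ = ε x := by ring
    have hpx' : p ∈ ball (x : X) (ε x) := ball_subset_ball (by linarith [half_pos (hε x x.2)]) hpx
    have := (hlip x x.2).dist_le_mul p hpx' q hqx
    calc dist (f p) (f q) ≤ K x * dist p q := this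
      _ ≤ M * dist p q := by
        gcongr
        rw [hMdef]
        exact Finset.le_sup' (fun (x : ↥k) => ((K (x:X)) : ℝ)) hxI
      _ ≤ max M (2 * D / δ) * dist p q :=
        mul_le_mul_of_nonneg_right (le_max_left _ _) dist_nonneg
  · -- far apart: use the diameter bound
    have h1 : dist (f p) (f q) ≤ 2 * D := by
      calc dist (f p) (f q) ≤ dist (f p) (f hne.choose) + dist (f q) (f hne.choose) :=
            dist_triangle_right _ _ _
        _ ≤ D + D := add_le_add (hD ⟨p, hp, rfl⟩) (hD ⟨q, hq, rfl⟩)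
        _ = 2 * D := by ring
    have hD0 : 0 ≤ D := le_trans dist_nonneg (hD ⟨hne.choose, hne.choose_spec, rfl⟩)
    calc dist (f p) (f q) ≤ 2 * D := h1
      _ = (2 * D / δ) * δ := by field_simp
      _ ≤ (2 * D / δ) * dist p q := mul_le_mul_of_nonneg_left hge (by positivity)
      _ ≤ max M (2 * D / δ) * dist p q :=
        mul_le_mul_of_nonneg_right (le_max_right _ _) dist_nonneg

set_option maxHeartbeats 1000000 in
/-- Local horizontal Lipschitz estimate for the fiberwise gradient of the squared dual
norm of a strongly convex horizontally `C²` family of asymmetric norms whose horizontal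
gradient `d_hF²` is locally Lipschitz. -/
theorem grad_dual_sq_horizontal_lipschitz {n : ℕ} (U Ut : Set (En n))
    (hU : IsOpen U) (hUt : IsOpen Ut)
    (hcomp : IsCompact (closure U)) (hsub : closure U ⊆ Ut)
    (G : En n → En n → ℝ) (hG : SmoothFamily Ut G)
    (F : En n → En n → ℝ) (hF : HorizC2Family Ut F)
    (hsc : StronglyConvexFamilyWrt Ut F G)
    (gh : En n × En n → En n)
    (hgh : ∀ x ∈ Ut, ∀ y : En n, HasGradientAt (fun x' => (F x' y) ^ 2) (gh (x, y)) x)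
    (hghLip : LocallyLipschitzOn (Ut ×ˢ (Set.univ : Set (En n))) gh)
    (g : En n → En n → En n)
    (hg : ∀ x ∈ Ut, ∀ α, HasGradientAt (fun β => (dualNormF F x β) ^ 2) (g x α) α) :
    ∀ x ∈ U, ∀ β : En n, ∃ U'' V'' : Set (En n),
      IsOpen U'' ∧ IsOpen V'' ∧ x ∈ U'' ∧ β ∈ V'' ∧ U'' ⊆ U ∧
      ∃ C₅ > (0 : ℝ), ∀ x₁ ∈ U'', ∀ x₂ ∈ U'', ∀ α ∈ V'',
        ‖g x₁ α - g x₂ α‖ ≤ C₅ * ‖x₁ - x₂‖ := by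
  classical
  intro x₀ hx₀U β
  rcases subsingleton_or_nontrivial (En n) with hss | hnt
  · refine ⟨U, Set.univ, hU, isOpen_univ, hx₀U, Set.mem_univ _, subset_rfl, 1, one_pos, ?_⟩
    intro x₁ _ x₂ _ α _
    have hx : x₁ = x₂ := Subsingleton.elim _ _
    subst hx
    simp
  obtain ⟨hFc1, -⟩ := hF
  obtain ⟨hFcont, hFnorm, -⟩ := hFc1
  obtain ⟨hGnorm, hGsmooth⟩ := hG
  have hUUt : U ⊆ Ut := fun y hy => hsub (subset_closure hy)
  obtain ⟨ε, hεpos, hballU⟩ := Metric.isOpen_iff.1 hU x₀ hx₀U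
  set r : ℝ := ε / 2 with hrdef
  have hrpos : 0 < r := half_pos hεpos
  set K : Set (En n) := Metric.closedBall x₀ r with hKdef
  have hKU : K ⊆ U := fun z hz =>
    hballU (lt_of_le_of_lt (Metric.mem_closedBall.1 hz) (by rw [hrdef]; linarith))
  have hKUt : K ⊆ Ut := fun z hz => hUUt (hKU hz)
  have hKcomp : IsCompact K := isCompact_closedBall _ _
  have hx₀K : x₀ ∈ K := Metric.mem_closedBall_self hrpos.le
  have hFopen : IsOpen (Ut ×ˢ (Set.univ : Set (En n))) := hUt.prod isOpen_univ
  have hFy : ∀ x ∈ Ut, Continuous (F x) := by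
    intro x hx
    rw [continuous_iff_continuousAt]
    intro y
    have h1 : ContinuousAt (fun p : En n × En n => F p.1 p.2) (x, y) :=
      hFcont.continuousAt (hFopen.mem_nhds ⟨hx, Set.mem_univ _⟩)
    exact h1.comp ((Continuous.prodMk continuous_const continuous_id).continuousAt)
  have hF0 : ∀ x ∈ Ut, F x 0 = 0 := fun x hx => ((hFnorm x hx).2.1 0).2 rfl
  have hFpos : ∀ x ∈ Ut, ∀ y : En n, y ≠ 0 → 0 < F x y := by
    intro x hx y hy
    rcases lt_or_eq_of_le ((hFnorm x hx).1 y) with h | h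
    · exact h
    · exact absurd (((hFnorm x hx).2.1 y).1 h.symm) hy
  have hFhom : ∀ x ∈ Ut, ∀ l : ℝ, 0 < l → ∀ y, F x (l • y) = l * F x y :=
    fun x hx => (hFnorm x hx).2.2.1
  obtain ⟨c₀, hc₀pos, hc₀⟩ : ∃ c₀ : ℝ, 0 < c₀ ∧ ∀ x ∈ K, ∀ y : En n, c₀ * ‖y‖ ≤ F x y := by
    obtain ⟨u, hu⟩ := NormedSpace.sphere_nonempty (E := En n) (x := 0) (r := 1) |>.2 zero_le_one
    have hS : IsCompact (K ×ˢ Metric.sphere (0 : En n) 1) := hKcomp.prod (isCompact_sphere _ _)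
    have hSne : (K ×ˢ Metric.sphere (0 : En n) 1).Nonempty := ⟨(x₀, u), hx₀K, hu⟩
    have hSsub : K ×ˢ Metric.sphere (0 : En n) 1 ⊆ Ut ×ˢ (Set.univ : Set (En n)) :=
      Set.prod_mono hKUt (Set.subset_univ _)
    obtain ⟨p, hpS, hpmin⟩ := hS.exists_isMinOn hSne (hFcont.mono hSsub)
    have hp2 : p.2 ≠ 0 := by
      have h2 := hpS.2
      rw [Metric.mem_sphere, dist_zero_right] at h2
      intro h; rw [h] at h2; simp at h2
    refine ⟨F p.1 p.2, hFpos p.1 (hKUt hpS.1) p.2 hp2, ?_⟩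
    intro x hx y
    rcases eq_or_ne y 0 with rfl | hy
    · simp [hF0 x (hKUt hx)]
    · have hyn : 0 < ‖y‖ := norm_pos_iff.2 hy
      have hu' : (‖y‖⁻¹ • y) ∈ Metric.sphere (0 : En n) 1 := by
        rw [Metric.mem_sphere, dist_zero_right, norm_smul, norm_inv, norm_norm]
        exact inv_mul_cancel₀ hyn.ne'
      have hmin := hpmin (Set.mk_mem_prod hx hu')
      have hrepr : F x y = ‖y‖ * F x (‖y‖⁻¹ • y) := by
        rw [← hFhom x (hKUt hx) ‖y‖ hyn, smul_inv_smul₀ hyn.ne']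
      rw [hrepr]
      calc F p.1 p.2 * ‖y‖ ≤ F x (‖y‖⁻¹ • y) * ‖y‖ :=
            mul_le_mul_of_nonneg_right hmin hyn.le
        _ = ‖y‖ * F x (‖y‖⁻¹ • y) := mul_comm _ _

  obtain ⟨c₁, hc₁pos, hc₁⟩ : ∃ c₁ : ℝ, 0 < c₁ ∧
      ∀ x ∈ K, ∀ v : En n, c₁ * ‖v‖ ^ 2 ≤ (G x v) ^ 2 := by
    obtain ⟨u, hu⟩ := NormedSpace.sphere_nonempty (E := En n) (x := 0) (r := 1) |>.2 zero_le_one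
    have hS : IsCompact (K ×ˢ Metric.sphere (0 : En n) 1) := hKcomp.prod (isCompact_sphere _ _)
    have hSne : (K ×ˢ Metric.sphere (0 : En n) 1).Nonempty := ⟨(x₀, u), hx₀K, hu⟩
    have hSsub : K ×ˢ Metric.sphere (0 : En n) 1 ⊆ Ut ×ˢ {y : En n | y ≠ 0} := by
      refine Set.prod_mono hKUt ?_
      intro z hz
      rw [Metric.mem_sphere, dist_zero_right] at hz
      intro h; rw [h] at hz; simp at hz
    obtain ⟨p, hpS, hpmin⟩ := hS.exists_isMinOn hSne (hGsmooth.continuousOn.mono hSsub)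
    have hp2 : p.2 ≠ 0 := by
      have h2 := hpS.2
      rw [Metric.mem_sphere, dist_zero_right] at h2
      intro h; rw [h] at h2; simp at h2
    have hGpos : ∀ x ∈ Ut, ∀ y : En n, y ≠ 0 → 0 < G x y := by
      intro x hx y hy
      rcases lt_or_eq_of_le ((hGnorm x hx).1 y) with h | h
      · exact h
      · exact absurd (((hGnorm x hx).2.1 y).1 h.symm) hy
    have hcpos : 0 < G p.1 p.2 := hGpos p.1 (hKUt hpS.1) p.2 hp2
    refine ⟨(G p.1 p.2) ^ 2, by positivity, ?_⟩
    intro x hx v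
    rcases eq_or_ne v 0 with rfl | hv
    · simp [((hGnorm x (hKUt hx)).2.1 0).2 rfl]
    · have hvn : 0 < ‖v‖ := norm_pos_iff.2 hv
      have hu' : (‖v‖⁻¹ • v) ∈ Metric.sphere (0 : En n) 1 := by
        rw [Metric.mem_sphere, dist_zero_right, norm_smul, norm_inv, norm_norm]
        exact inv_mul_cancel₀ hvn.ne'
      have hmin := hpmin (Set.mk_mem_prod hx hu')
      have hrepr : G x v = ‖v‖ * G x (‖v‖⁻¹ • v) := by
        rw [← (hGnorm x (hKUt hx)).2.2.1 ‖v‖ hvn, smul_inv_smul₀ hvn.ne']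
      have h1 : G p.1 p.2 * ‖v‖ ≤ G x v := by
        rw [hrepr]
        calc G p.1 p.2 * ‖v‖ ≤ G x (‖v‖⁻¹ • v) * ‖v‖ :=
              mul_le_mul_of_nonneg_right hmin hvn.le
          _ = ‖v‖ * G x (‖v‖⁻¹ • v) := mul_comm _ _
      have h2 : (G p.1 p.2 * ‖v‖) ^ 2 ≤ (G x v) ^ 2 := by
        apply pow_le_pow_left₀ (by positivity) h1
      calc (G p.1 p.2) ^ 2 * ‖v‖ ^ 2 = (G p.1 p.2 * ‖v‖) ^ 2 := by ring
        _ ≤ (G x v) ^ 2 := h2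

  set R : ℝ := 2 * (‖β‖ + 1) / c₀ ^ 2 + 1 with hRdef
  have hRpos : 0 < R := by positivity
  obtain ⟨L, hL0, hLip⟩ : ∃ L : ℝ, 0 ≤ L ∧ ∀ x ∈ K, ∀ x' ∈ K,
      ∀ y ∈ Metric.closedBall (0 : En n) R, ∀ y' ∈ Metric.closedBall (0 : En n) R,
      ‖gh (x, y) - gh (x', y')‖ ≤ L * max ‖x - x'‖ ‖y - y'‖ := by
    have hkcomp : IsCompact (K ×ˢ Metric.closedBall (0 : En n) R) :=
      hKcomp.prod (isCompact_closedBall _ _)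
    have hksub : K ×ˢ Metric.closedBall (0 : En n) R ⊆ Ut ×ˢ (Set.univ : Set (En n)) :=
      Set.prod_mono hKUt (Set.subset_univ _)
    obtain ⟨L, hL0, hL⟩ := lipschitzOn_of_locallyLipschitzOn_compact hFopen hghLip hkcomp hksub
    refine ⟨L, hL0, ?_⟩
    intro x hx x' hx' y hy y' hy'
    have := hL (x, y) (Set.mk_mem_prod hx hy) (x', y') (Set.mk_mem_prod hx' hy')
    rw [dist_eq_norm] at this
    rwa [Prod.dist_eq, dist_eq_norm, dist_eq_norm] at this

  have key : ∀ x₁ ∈ K, ∀ x₂ ∈ K, ∀ y ∈ Metric.closedBall (0 : En n) R,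
      ∀ y' ∈ Metric.closedBall (0 : En n) R,
      ((F x₁ y) ^ 2 - (F x₂ y) ^ 2) - ((F x₁ y') ^ 2 - (F x₂ y') ^ 2)
        ≤ L * ‖y - y'‖ * ‖x₁ - x₂‖ := by
    intro x₁ hx₁ x₂ hx₂ y hy y' hy'
    set f : En n → ℝ := fun x => (F x y) ^ 2 - (F x y') ^ 2 with hfdef
    set f' : En n → (En n →L[ℝ] ℝ) := fun x =>
      (InnerProductSpace.toDual ℝ (En n)) (gh (x, y)) -
        (InnerProductSpace.toDual ℝ (En n)) (gh (x, y')) with hf'def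
    have hder : ∀ x ∈ K, HasFDerivWithinAt f (f' x) K x := by
      intro x hx
      exact (((hgh x (hKUt hx) y).hasFDerivAt).sub
        ((hgh x (hKUt hx) y').hasFDerivAt)).hasFDerivWithinAt
    have hbound : ∀ x ∈ K, ‖f' x‖ ≤ L * ‖y - y'‖ := by
      intro x hx
      have h1 : f' x = (InnerProductSpace.toDual ℝ (En n)) (gh (x, y) - gh (x, y')) := by
        rw [hf'def, map_sub]
      rw [h1, (InnerProductSpace.toDual ℝ (En n)).norm_map]
      have h2 := hLip x hx x hx y hy y' hy'
      have h3 : max ‖x - x‖ ‖y - y'‖ = ‖y - y'‖ := by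
        rw [sub_self, norm_zero]
        exact max_eq_right (norm_nonneg _)
      rwa [h3] at h2
    have hmvt := (convex_closedBall x₀ r).norm_image_sub_le_of_norm_hasFDerivWithin_le
      hder hbound hx₂ hx₁
    have h4 : f x₁ - f x₂ ≤ L * ‖y - y'‖ * ‖x₁ - x₂‖ :=
      le_trans (le_abs_self _) (by rwa [Real.norm_eq_abs] at hmvt)
    simp only [hfdef] at h4
    linarith [h4]
  have hbdd : ∀ x ∈ K, ∀ α : En n,
      BddAbove ((fun y => ⟪α, y⟫) '' {y | F x y ≤ 1}) := by
    intro x hx α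
    refine ⟨‖α‖ / c₀, ?_⟩
    rintro s ⟨z, hz, rfl⟩
    have h1 : c₀ * ‖z‖ ≤ 1 := le_trans (hc₀ x hx z) hz
    have h2 : ⟪α, z⟫ ≤ ‖α‖ * ‖z‖ := real_inner_le_norm α z
    have h3 : ‖z‖ ≤ 1 / c₀ := by rw [le_div_iff₀ hc₀pos]; linarith
    calc ⟪α, z⟫ ≤ ‖α‖ * ‖z‖ := h2
      _ ≤ ‖α‖ * (1 / c₀) := mul_le_mul_of_nonneg_left h3 (norm_nonneg _)
      _ = ‖α‖ / c₀ := by ring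
  have hmem0 : ∀ x ∈ K, ∀ α : En n,
      (0 : ℝ) ∈ ((fun y => ⟪α, y⟫) '' {y | F x y ≤ 1}) := by
    intro x hx α
    exact ⟨0, by simp [Set.mem_setOf_eq, hF0 x (hKUt hx)], inner_zero_right α⟩
  have hd0 : ∀ x ∈ K, ∀ α : En n, 0 ≤ dualNormF F x α := by
    intro x hx α
    exact le_csSup (hbdd x hx α) (hmem0 x hx α)
  have parti : ∀ x ∈ K, ∀ α y : En n, 2 * ⟪α, y⟫ - (F x y) ^ 2 ≤ (dualNormF F x α) ^ 2 := by
    intro x hx α y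
    rcases eq_or_ne y 0 with rfl | hy
    · have h5 : (0:ℝ) ≤ (dualNormF F x α) ^ 2 := sq_nonneg _
      rw [hF0 x (hKUt hx)]
      simp only [inner_zero_right]
      linarith
    · set t : ℝ := F x y with htdef
      have ht : 0 < t := hFpos x (hKUt hx) y hy
      set u : En n := t⁻¹ • y with hudef
      have hu1 : F x u = 1 := by
        rw [hudef, hFhom x (hKUt hx) t⁻¹ (inv_pos.2 ht), ← htdef, inv_mul_cancel₀ ht.ne']
      have huS : ⟪α, u⟫ ≤ dualNormF F x α :=
        le_csSup (hbdd x hx α) ⟨u, le_of_eq hu1, rfl⟩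
      have hyu : ⟪α, y⟫ = t * ⟪α, u⟫ := by
        rw [hudef, real_inner_smul_right]
        field_simp
      rw [hyu]
      nlinarith [sq_nonneg (dualNormF F x α - t), hd0 x hx α]
  have hmax : ∀ x ∈ K, ∀ α ∈ Metric.closedBall β 1, ∃ w : En n, ‖w‖ ≤ R ∧
      ∀ z : En n, 2 * ⟪α, z⟫ - (F x z) ^ 2 ≤ 2 * ⟪α, w⟫ - (F x w) ^ 2 := by
    intro x hx α hα
    have hαn : ‖α‖ ≤ ‖β‖ + 1 := by
      have h1 : dist α β ≤ 1 := Metric.mem_closedBall.1 hα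
      have h2 : ‖α‖ - ‖β‖ ≤ ‖α - β‖ := norm_sub_norm_le α β
      rw [dist_eq_norm] at h1
      linarith
    have hφcont : Continuous (fun z : En n => 2 * ⟪α, z⟫ - (F x z) ^ 2) := by
      exact (continuous_const.mul (continuous_const.inner continuous_id)).sub
        ((hFy x (hKUt hx)).pow 2)
    obtain ⟨w, hwmem, hwmax⟩ := (isCompact_closedBall (0 : En n) R).exists_isMaxOn
      ⟨0, Metric.mem_closedBall_self hRpos.le⟩ hφcont.continuousOn
    refine ⟨w, by simpa using Metric.mem_closedBall.1 hwmem, ?_⟩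
    have h0w : (0:ℝ) ≤ 2 * ⟪α, w⟫ - (F x w) ^ 2 := by
      have h1 : 2 * ⟪α, (0 : En n)⟫ - (F x 0) ^ 2 ≤ 2 * ⟪α, w⟫ - (F x w) ^ 2 :=
        hwmax (Metric.mem_closedBall_self hRpos.le)
      rw [inner_zero_right, hF0 x (hKUt hx)] at h1
      linarith [h1]
    intro z
    rcases le_or_gt ‖z‖ R with hz | hz
    · exact hwmax (by rw [Metric.mem_closedBall, dist_zero_right]; exact hz)
    · have h1 : ⟪α, z⟫ ≤ ‖α‖ * ‖z‖ := real_inner_le_norm α z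
      have h2 : c₀ * ‖z‖ ≤ F x z := hc₀ x hx z
      have h3 : (c₀ * ‖z‖) ^ 2 ≤ (F x z) ^ 2 := by
        apply pow_le_pow_left₀ (by positivity) h2
      have h4 : c₀ ^ 2 * R = 2 * (‖β‖ + 1) + c₀ ^ 2 := by
        rw [hRdef]; field_simp
      have h5 : 2 * ⟪α, z⟫ - (F x z) ^ 2 ≤ 0 := by
        have hzpos : 0 < ‖z‖ := lt_trans hRpos hz
        nlinarith [h1, h3, h4, mul_le_mul_of_nonneg_right hαn (norm_nonneg z),
          mul_lt_mul_of_pos_right hz hzpos, sq_nonneg c₀,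
          mul_pos (mul_pos hc₀pos hc₀pos) hzpos]
      linarith
  have hdual : ∀ x ∈ K, ∀ α : En n, ∀ w : En n,
      (∀ z : En n, 2 * ⟪α, z⟫ - (F x z) ^ 2 ≤ 2 * ⟪α, w⟫ - (F x w) ^ 2) →
      (dualNormF F x α) ^ 2 = 2 * ⟪α, w⟫ - (F x w) ^ 2 := by
    intro x hx α w hw
    refine le_antisymm ?_ (parti x hx α w)
    have h0w : (0:ℝ) ≤ 2 * ⟪α, w⟫ - (F x w) ^ 2 := by
      have h1 := hw 0
      rw [inner_zero_right, hF0 x (hKUt hx)] at h1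
      linarith [h1]
    rcases eq_or_lt_of_le (hd0 x hx α) with hd | hd
    · rw [← hd]
      simpa using h0w
    · refine le_of_forall_pos_le_add ?_
      intro ε hε
      set d := dualNormF F x α with hddef
      have hlt : d - ε / (2 * d) < d := by
        have hq : 0 < ε / (2 * d) := by positivity
        linarith
      obtain ⟨s', hsS, hs⟩ := exists_lt_of_lt_csSup
        (Set.nonempty_of_mem (hmem0 x hx α)) hlt
      obtain ⟨z, hz, rfl⟩ := hsS
      have hF1 : F x (d • z) = d * F x z := hFhom x (hKUt hx) d hd z
      have hsq : (F x (d • z)) ^ 2 ≤ d ^ 2 := by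
        rw [hF1]
        have h2 : 0 ≤ F x z := (hFnorm x (hKUt hx)).1 z
        have hz' : F x z ≤ 1 := hz
        have h3 : F x z ^ 2 ≤ 1 := by nlinarith [hz', h2]
        nlinarith [sq_nonneg d, h3, sq_nonneg (F x z)]
      have hin : ⟪α, d • z⟫ = d * ⟪α, z⟫ := real_inner_smul_right α z d
      have hle := hw (d • z)
      rw [hin] at hle
      have hmid : d ^ 2 - ε ≤ 2 * (d * ⟪α, z⟫) - (F x (d • z)) ^ 2 := by
        have h3 : d * (d - ε / (2 * d)) ≤ d * ⟪α, z⟫ :=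
          mul_le_mul_of_nonneg_left hs.le hd.le
        have h4 : d * (d - ε / (2 * d)) = d ^ 2 - ε / 2 := by
          field_simp
        nlinarith [hsq]
      linarith [hle, hmid]
  have hgrad : ∀ x ∈ K, ∀ α : En n, ∀ w : En n,
      (∀ z : En n, 2 * ⟪α, z⟫ - (F x z) ^ 2 ≤ 2 * ⟪α, w⟫ - (F x w) ^ 2) →
      g x α = (2 : ℝ) • w := by
    intro x hx α w hw
    set v : En n := (2 : ℝ) • w with hvdef
    have hsubgrad : ∀ α' : En n,
        (dualNormF F x α) ^ 2 + ⟪v, α' - α⟫ ≤ (dualNormF F x α') ^ 2 := by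
      intro α'
      have h1 := parti x hx α' w
      have h2 := hdual x hx α w hw
      have h3 : ⟪v, α' - α⟫ = 2 * ⟪α', w⟫ - 2 * ⟪α, w⟫ := by
        rw [hvdef, real_inner_smul_left, inner_sub_right, real_inner_comm w α',
          real_inner_comm w α]
        ring
      rw [h2, h3]
      linarith
    have hmin : IsLocalMin (fun α' : En n =>
        (dualNormF F x α') ^ 2 - (InnerProductSpace.toDual ℝ (En n)) v α') α :=
      Filter.Eventually.of_forall (fun α' => by
        have h1 := hsubgrad α'
        have h4 : ⟪v, α' - α⟫ = ⟪v, α'⟫ - ⟪v, α⟫ := inner_sub_right v α' α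
        simp only [InnerProductSpace.toDual_apply_apply]
        linarith [h1, h4.le, h4.ge])
    have hder : HasFDerivAt (fun α' : En n =>
        (dualNormF F x α') ^ 2 - (InnerProductSpace.toDual ℝ (En n)) v α')
        ((InnerProductSpace.toDual ℝ (En n)) (g x α) - (InnerProductSpace.toDual ℝ (En n)) v)
        α :=
      ((hg x (hKUt hx) α).hasFDerivAt).sub ((InnerProductSpace.toDual ℝ (En n) v).hasFDerivAt)
    have hzero := hmin.hasFDerivAt_eq_zero hder
    have h5 : (InnerProductSpace.toDual ℝ (En n)) (g x α - v) = 0 := by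
      rw [map_sub]; exact hzero
    have h6 : g x α - v = 0 := by
      apply (InnerProductSpace.toDual ℝ (En n)).injective
      rw [h5, map_zero]
    exact sub_eq_zero.1 h6
  refine ⟨Metric.ball x₀ r, Metric.ball β 1, Metric.isOpen_ball, Metric.isOpen_ball,
    Metric.mem_ball_self hrpos, Metric.mem_ball_self one_pos,
    fun z hz => hKU (Metric.ball_subset_closedBall hz), L / c₁ + 1, by positivity, ?_⟩
  intro x₁ hx₁ x₂ hx₂ α hα
  have hx₁K : x₁ ∈ K := Metric.ball_subset_closedBall hx₁
  have hx₂K : x₂ ∈ K := Metric.ball_subset_closedBall hx₂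
  have hαK : α ∈ Metric.closedBall β 1 := Metric.ball_subset_closedBall hα
  obtain ⟨y₁, hy₁R, hy₁max⟩ := hmax x₁ hx₁K α hαK
  obtain ⟨y₂, hy₂R, hy₂max⟩ := hmax x₂ hx₂K α hαK
  have hg1 : g x₁ α = (2 : ℝ) • y₁ := hgrad x₁ hx₁K α y₁ hy₁max
  have hg2 : g x₂ α = (2 : ℝ) • y₂ := hgrad x₂ hx₂K α y₂ hy₂max
  -- strong convexity estimates
  have hsubmem : ∀ x ∈ K, ∀ w : En n,
      (∀ z : En n, 2 * ⟪α, z⟫ - (F x z) ^ 2 ≤ 2 * ⟪α, w⟫ - (F x w) ^ 2) →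
      ((2 : ℝ) • α) ∈ subdiffSqF F x w := by
    intro x hx w hw z
    have h1 := hw z
    have hinner : ⟪(2 : ℝ) • α, z - w⟫ = 2 * ⟪α, z⟫ - 2 * ⟪α, w⟫ := by
      rw [real_inner_smul_left, inner_sub_right]; ring
    rw [hinner]; linarith
  have hstr1 := hsc x₁ (hKUt hx₁K) y₁ y₂ ((2 : ℝ) • α) (hsubmem x₁ hx₁K y₁ hy₁max)
  have hstr2 := hsc x₂ (hKUt hx₂K) y₂ y₁ ((2 : ℝ) • α) (hsubmem x₂ hx₂K y₂ hy₂max)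
  have hin1 : ⟪(2 : ℝ) • α, y₂ - y₁⟫ = 2 * ⟪α, y₂⟫ - 2 * ⟪α, y₁⟫ := by
    rw [real_inner_smul_left, inner_sub_right]; ring
  have hin2 : ⟪(2 : ℝ) • α, y₁ - y₂⟫ = 2 * ⟪α, y₁⟫ - 2 * ⟪α, y₂⟫ := by
    rw [real_inner_smul_left, inner_sub_right]; ring
  rw [hin1] at hstr1
  rw [hin2] at hstr2
  have hG1 : c₁ * ‖y₂ - y₁‖ ^ 2 ≤ (G x₁ (y₂ - y₁)) ^ 2 := hc₁ x₁ hx₁K _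
  have hG2 : c₁ * ‖y₁ - y₂‖ ^ 2 ≤ (G x₂ (y₁ - y₂)) ^ 2 := hc₁ x₂ hx₂K _
  have hkey := key x₂ hx₂K x₁ hx₁K y₁ (Metric.mem_closedBall.2 (by simpa using hy₁R))
    y₂ (Metric.mem_closedBall.2 (by simpa using hy₂R))
  have hnorm12 : ‖y₂ - y₁‖ = ‖y₁ - y₂‖ := norm_sub_rev _ _
  rw [hnorm12] at hG1
  -- combine: 2 c₁ ‖y₁ - y₂‖² ≤ L ‖y₁ - y₂‖ ‖x₂ - x₁‖
  have hcomb : 2 * c₁ * ‖y₁ - y₂‖ ^ 2 ≤ L * ‖y₁ - y₂‖ * ‖x₂ - x₁‖ := by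
    nlinarith [hstr1, hstr2, hG1, hG2, hkey]
  have hxrev : ‖x₂ - x₁‖ = ‖x₁ - x₂‖ := norm_sub_rev _ _
  rw [hxrev] at hcomb
  have hgdiff : ‖g x₁ α - g x₂ α‖ = 2 * ‖y₁ - y₂‖ := by
    rw [hg1, hg2, ← smul_sub, norm_smul]
    simp [abs_of_nonneg]
  rw [hgdiff]
  rcases eq_or_lt_of_le (norm_nonneg (y₁ - y₂)) with h0 | h0
  · have hpos : (0:ℝ) ≤ (L / c₁ + 1) * ‖x₁ - x₂‖ := by positivity
    rw [← h0]
    linarith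
  · have h1 : 2 * ‖y₁ - y₂‖ ≤ (L / c₁) * ‖x₁ - x₂‖ := by
      rw [div_mul_eq_mul_div, le_div_iff₀ hc₁pos]
      nlinarith [hcomb]
    have h2 : (L / c₁) * ‖x₁ - x₂‖ ≤ (L / c₁ + 1) * ‖x₁ - x₂‖ := by
      have h3 := norm_nonneg (x₁ - x₂)
      have h4 : 0 ≤ L / c₁ := div_nonneg hL0 hc₁pos.le
      nlinarith
    linarith
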